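/- arXiv:2208.08499 — 5 statements merged into one kernel-verified Lean document; each statement's English description precedes it below -/
import Mathlib

section
/- (Füredi's stability theorem) Every n-vertex K_{r+1}-free graph G contains an r-partite subgraph G₀ such that e(G) − e(G₀) ≤ e(T_r(n)) − e(G). -/
/-!
Füredi's argument. It suffices to find an `r`-partite `G₀ ≤ G` with `2 e(G) ≤ e(G₀) + t_r(n)`;
we do this by induction on `r`. Let `N` be the neighbourhood of a vertex of maximum degree
`d = |N|`; it spans a `K_r`-free graph, so by induction `G[N]` has an `(r-1)`-partite subgraph `H`
with `2 e(G[N]) ≤ e(H) + t_{r-1}(d)`. Take `G₀ = H ∪ G[N, V ∖ N]`, giving the vertices outside `N`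
a new colour. Counting degrees,
`2 e(G) = 2 e(G[N]) + e(G[N, V ∖ N]) + ∑_{v ∉ N} deg v` and `∑_{v ∉ N} deg v ≤ d (n - d)`,
so `2 e(G) ≤ e(G₀) + t_{r-1}(d) + d (n - d)`. Finally `t_{r-1}(d) + d (n - d) ≤ t_r(n)` by Turán's
theorem, since the same construction applied to `T_{r-1}(d)` and the complete graph gives an
`r`-partite graph with that many edges.
-/

open Finset

namespace SimpleGraph

variable {V W : Type*}

lemma ncard_edgeSet_eq_card_edgeFinset (G : SimpleGraph V) [Fintype G.edgeSet] :
    G.edgeSet.ncard = #G.edgeFinset := by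
  rw [← coe_edgeFinset, Set.ncard_coe_finset]

lemma degree_eq_card_inter_add_degree_between [Fintype V] [DecidableEq V]
    (G : SimpleGraph V) [DecidableRel G.Adj] {s : Finset V} {v : V} (hv : v ∈ s) :
    G.degree v = #(G.neighborFinset v ∩ s) + (G.between s (↑s)ᶜ).degree v := by
  have : (G.between s (↑s)ᶜ).neighborFinset v = G.neighborFinset v \ s := by
    ext w; simp [between_adj, hv]
  rw [← card_neighborFinset_eq_degree, ← card_neighborFinset_eq_degree, this,
    card_inter_add_card_sdiff]

lemma sum_degree_eq_two_mul_ncard_induce_add [Fintype V] (G : SimpleGraph V) [DecidableRel G.Adj]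
    (s : Finset V) :
    ∑ v ∈ s, G.degree v =
      2 * (G.induce s).edgeSet.ncard + (G.between s (↑s)ᶜ).edgeSet.ncard := by
  classical
  have hinduce : ∑ v ∈ s, #(G.neighborFinset v ∩ s) = 2 * (G.induce s).edgeSet.ncard := by
    rw [ncard_edgeSet_eq_card_edgeFinset, ← sum_degrees_eq_twice_card_edges,
      ← Finset.sum_coe_sort s]
    refine Fintype.sum_congr _ _ fun v => ?_
    have := congrArg card (map_neighborFinset_induce (G := G) (s := (s : Set V)) v)
    rw [card_map, card_neighborFinset_eq_degree, toFinset_coe] at this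
    convert this.symm
  have hbetween : ∑ v ∈ s, (G.between s (↑s)ᶜ).degree v = (G.between s (↑s)ᶜ).edgeSet.ncard := by
    rw [ncard_edgeSet_eq_card_edgeFinset]
    have h : (G.between s (↑s)ᶜ).IsBipartiteWith ↑s ↑sᶜ := by
      simpa using between_isBipartiteWith disjoint_compl_right
    exact isBipartiteWith_sum_degrees_eq_card_edges h
  rw [← hinduce, ← hbetween, ← sum_add_distrib]
  exact sum_congr rfl fun v hv => G.degree_eq_card_inter_add_degree_between hv

lemma Colorable.map_sup_between {K : SimpleGraph W} {r : ℕ} (hK : K.Colorable r) (f : W ↪ V)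
    (F : SimpleGraph V) :
    (K.map f ⊔ F.between (Set.range f) (Set.range f)ᶜ).Colorable (r + 1) := by
  obtain ⟨c⟩ := hK
  refine ⟨Coloring.mk (Function.extend f (Fin.castSucc ∘ c) fun _ => Fin.last r) ?_⟩
  rintro a b (⟨-, u, v, huv, rfl, rfl⟩ | ⟨-, ⟨⟨u, rfl⟩, hb⟩ | ⟨ha, ⟨v, rfl⟩⟩⟩)
  · simpa [f.injective.extend_apply] using c.valid huv
  · rw [f.injective.extend_apply, Function.extend_apply' _ _ _ hb]
    exact (Fin.castSucc_lt_last _).ne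
  · rw [f.injective.extend_apply, Function.extend_apply' _ _ _ ha]
    exact (Fin.castSucc_lt_last _).ne'

lemma ncard_edgeSet_map_sup_between [Finite V] (K : SimpleGraph W) (f : W ↪ V)
    (F : SimpleGraph V) :
    (K.map f ⊔ F.between (Set.range f) (Set.range f)ᶜ).edgeSet.ncard =
      K.edgeSet.ncard + (F.between (Set.range f) (Set.range f)ᶜ).edgeSet.ncard := by
  have hdisj : Disjoint (K.map f) (F.between (Set.range f) (Set.range f)ᶜ) := by
    rw [disjoint_left]
    rintro _ _ ⟨-, u, v, -, rfl, rfl⟩ ⟨-, ⟨-, hv⟩ | ⟨hu, -⟩⟩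
    · exact hv ⟨v, rfl⟩
    · exact hu ⟨u, rfl⟩
  rw [edgeSet_sup, Set.ncard_union_eq (disjoint_edgeSet.mpr hdisj), edgeSet_map,
    Set.ncard_image_of_injective _ f.sym2Map.injective]

lemma ncard_edgeSet_top_between_compl [Finite V] (s : Set V) :
    ((⊤ : SimpleGraph V).between s sᶜ).edgeSet.ncard = s.ncard * sᶜ.ncard := by
  classical
  have := Fintype.ofFinite V
  obtain ⟨t, rfl⟩ : ∃ t : Finset V, ↑t = s := ⟨s.toFinset, s.coe_toFinset⟩
  have h : ((⊤ : SimpleGraph V).between t (↑t)ᶜ).IsBipartiteWith ↑t ↑tᶜ := by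
    simpa using between_isBipartiteWith disjoint_compl_right
  have hcompl : (↑t : Set V)ᶜ.ncard = #tᶜ := by rw [← coe_compl, Set.ncard_coe_finset]
  rw [ncard_edgeSet_eq_card_edgeFinset, ← isBipartiteWith_sum_degrees_eq_card_edges h, hcompl,
    Set.ncard_coe_finset, ← smul_eq_mul, ← sum_const]
  refine sum_congr rfl fun v hv => ?_
  rw [← card_neighborFinset_eq_degree]
  congr 1
  ext w
  simp only [mem_neighborFinset, between_adj, top_adj, Set.mem_compl_iff, mem_coe, hv,
    mem_compl]
  grind

lemma turanGraph_colorable {n r : ℕ} (hr : 0 < r) : (turanGraph n r).Colorable r :=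
  ⟨Coloring.mk (fun v => ⟨v % r, Nat.mod_lt _ hr⟩) fun h => by
    simpa [turanGraph_adj, Fin.ext_iff] using h⟩

lemma ncard_edgeSet_turanGraph_add_mul_le {d n r : ℕ} (hr : 0 < r) (hdn : d ≤ n) :
    (turanGraph d r).edgeSet.ncard + d * (n - d) ≤ (turanGraph n (r + 1)).edgeSet.ncard := by
  classical
  let f := Fin.castLEEmb hdn
  let J := (turanGraph d r).map f ⊔ (⊤ : SimpleGraph (Fin n)).between (Set.range f) (Set.range f)ᶜ
  have hJ : J.CliqueFree (r + 2) := ((turanGraph_colorable hr).map_sup_between f ⊤).cliqueFree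
    (Nat.lt_succ_self _)
  have hrange : (Set.range f).ncard = d := by
    rw [Set.ncard_range_of_injective f.injective, Nat.card_eq_fintype_card, Fintype.card_fin]
  calc (turanGraph d r).edgeSet.ncard + d * (n - d)
      = J.edgeSet.ncard := by
        rw [ncard_edgeSet_map_sup_between, ncard_edgeSet_top_between_compl, Set.ncard_compl,
          hrange, Nat.card_eq_fintype_card, Fintype.card_fin]
    _ ≤ (turanGraph n (r + 1)).edgeSet.ncard := by
        simp only [ncard_edgeSet_eq_card_edgeFinset]
        convert (isTuranMaximal_turanGraph r.succ_pos).2 hJ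

lemma two_mul_ncard_edgeSet_le [Fintype V] (G : SimpleGraph V) [DecidableRel G.Adj]
    (N : Finset V) (hdeg : ∀ v ∉ N, G.degree v ≤ #N) :
    2 * G.edgeSet.ncard ≤ 2 * (G.induce N).edgeSet.ncard + (G.between N (↑N)ᶜ).edgeSet.ncard +
      #N * (Fintype.card V - #N) := by
  classical
  have houtside : ∑ v ∈ Nᶜ, G.degree v ≤ #N * (Fintype.card V - #N) := by
    rw [mul_comm, ← card_compl, ← smul_eq_mul]
    exact sum_le_card_nsmul _ _ _ fun v hv => hdeg v (mem_compl.mp hv)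
  rw [ncard_edgeSet_eq_card_edgeFinset, ← sum_degrees_eq_twice_card_edges,
    ← sum_add_sum_compl N, sum_degree_eq_two_mul_ncard_induce_add]
  exact Nat.add_le_add_left houtside _

lemma CliqueFree.exists_cliqueFree_induce_forall_degree_le [Fintype V] {G : SimpleGraph V}
    [DecidableRel G.Adj] {r : ℕ} (hG : G.CliqueFree (r + 2)) :
    ∃ N : Finset V, (G.induce N).CliqueFree (r + 1) ∧ ∀ v, G.degree v ≤ #N := by
  cases isEmpty_or_nonempty V
  · exact ⟨∅, cliqueFree_of_card_lt (by simp), fun v => isEmptyElim v⟩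
  · obtain ⟨x, hx⟩ := G.exists_maximal_degree_vertex
    refine ⟨G.neighborFinset x, ?_, fun v => ?_⟩
    · rw [coe_neighborFinset, cliqueFree_induce_iff]
      simpa using CliqueFreeOn.of_succ G hG.cliqueFreeOn (Set.mem_univ x)
    · rw [card_neighborFinset_eq_degree, ← hx]
      exact G.degree_le_maxDegree v

theorem CliqueFree.exists_colorable_le_two_mul_ncard_edgeSet_le [Fintype V] {G : SimpleGraph V}
    {r : ℕ} (hG : G.CliqueFree (r + 1)) :
    ∃ H ≤ G, H.Colorable r ∧
      2 * G.edgeSet.ncard ≤ H.edgeSet.ncard + (turanGraph (Fintype.card V) r).edgeSet.ncard := by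
  induction r generalizing V with
  | zero =>
    have : IsEmpty V := cliqueFree_one.mp hG
    have hG₀ : G = ⊥ := Subsingleton.elim _ _
    exact ⟨⊥, bot_le, .of_isEmpty _, by simp [hG₀]⟩
  | succ r ih =>
    classical
    obtain ⟨N, hN, hdeg⟩ := hG.exists_cliqueFree_induce_forall_degree_le
    obtain ⟨H, hHG, hH, hHe⟩ := ih hN
    let f := Function.Embedding.subtype (· ∈ (N : Set V))
    have hf : Set.range f = N := Subtype.range_coe
    refine ⟨H.map f ⊔ G.between (Set.range f) (Set.range f)ᶜ,
      sup_le ((map_le_iff_le_comap f H G).mpr hHG) between_le, hH.map_sup_between f G, ?_⟩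
    have hcount := G.two_mul_ncard_edgeSet_le N fun v _ => hdeg v
    have hcmp : (turanGraph #N r).edgeSet.ncard + #N * (Fintype.card V - #N) ≤
        (turanGraph (Fintype.card V) (r + 1)).edgeSet.ncard := by
      rcases r.eq_zero_or_pos with rfl | hr
      -- `turanGraph d 0` is complete, but for `r = 0` the set `N` is empty.
      · have : IsEmpty (N : Set V) := cliqueFree_one.mp hN
        have hN₀ : #N = 0 := by simpa using this
        rw [hN₀, Set.eq_empty_of_isEmpty (turanGraph 0 0).edgeSet]
        simp
      · exact ncard_edgeSet_turanGraph_add_mul_le hr (card_le_univ N)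
    rw [ncard_edgeSet_map_sup_between, hf]
    have hcardN : Fintype.card (N : Set V) = #N := by simp
    rw [hcardN] at hHe
    omega

end SimpleGraph

open SimpleGraph

/-- Füredi's stability theorem: every `n`-vertex `K_{r+1}`-free graph `G` contains an
`r`-partite subgraph `G₀` such that `e(G) − e(G₀) ≤ e(T_r(n)) − e(G)`. -/
theorem furedi_stability (n r : ℕ) (G : SimpleGraph (Fin n)) (hG : G.CliqueFree (r + 1)) :
    ∃ G₀ : SimpleGraph (Fin n), G₀ ≤ G ∧ G₀.Colorable r ∧
      (G.edgeSet.ncard : ℤ) - (G₀.edgeSet.ncard : ℤ) ≤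
        ((turanGraph n r).edgeSet.ncard : ℤ) - (G.edgeSet.ncard : ℤ) := by
  obtain ⟨G₀, hle, hcol, hcount⟩ := hG.exists_colorable_le_two_mul_ncard_edgeSet_le
  rw [Fintype.card_fin] at hcount
  exact ⟨G₀, hle, hcol, by omega⟩
end

section
/- Let H be a graph with at least one edge, let G be an n-vertex graph, and let v ∈ V(G). Then the number of injective homomorphisms from H to G whose image contains v is at most v(H)·n^{v(H)−1} − (n − deg(v))·n^{v(H)−2}. -/
open SimpleGraph

/-- If `H` has at least one edge and `G` is an `n`-vertex graph, then the number of
injective homomorphisms from `H` to `G` whose image contains a given vertex `v` is at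
most `v(H)·n^{v(H)−1} − (n − deg(v))·n^{v(H)−2}`. -/
theorem injCount_through_vertex_upper {α : Type*} [Fintype α] (H : SimpleGraph α)
    (hH : H.edgeSet.Nonempty) (n : ℕ) (G : SimpleGraph (Fin n)) (v : Fin n) :
    (Nat.card {f : α → Fin n // Function.Injective f ∧
        (∀ ⦃a b⦄, H.Adj a b → G.Adj (f a) (f b)) ∧ v ∈ Set.range f} : ℝ) ≤
      (Fintype.card α : ℝ) * (n : ℝ) ^ (Fintype.card α - 1) -
        ((n : ℝ) - ((G.neighborSet v).ncard : ℝ)) * (n : ℝ) ^ (Fintype.card α - 2) := by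
  classical
  obtain ⟨e, he⟩ := hH
  induction e using Sym2.ind with | _ x y =>
  rw [SimpleGraph.mem_edgeSet] at he
  have hxy : x ≠ y := he.ne
  have hk2 : 2 ≤ Fintype.card α := by
    have h1 : ({x, y} : Finset α).card ≤ Fintype.card α := Finset.card_le_univ _
    have : ({x, y} : Finset α).card = 2 := by
      rw [Finset.card_insert_of_notMem (by simpa using hxy), Finset.card_singleton]
    omega
  obtain ⟨m, hm⟩ : ∃ m, Fintype.card α = m + 2 := ⟨Fintype.card α - 2, by omega⟩
  set d := (G.neighborSet v).ncard with hd
  set T : α → Type _ :=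
    fun a => {f : α → Fin n // f a = v ∧ ∀ ⦃c e⦄, H.Adj c e → G.Adj (f c) (f e)} with hT
  have hinj : Nat.card {f : α → Fin n // Function.Injective f ∧
        (∀ ⦃a b⦄, H.Adj a b → G.Adj (f a) (f b)) ∧ v ∈ Set.range f}
      ≤ Nat.card (Σ a : α, T a) := by
    apply Nat.card_le_card_of_injective
      (fun f => ⟨f.2.2.2.choose, ⟨f.1, f.2.2.2.choose_spec, f.2.2.1⟩⟩)
    intro f g h
    exact Subtype.ext (congrArg (fun p : Σ a : α, T a => p.2.1) h)
  have hsig : Nat.card (Σ a : α, T a) = ∑ a : α, Nat.card (T a) := by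
    simp [Nat.card_eq_fintype_card, Fintype.card_sigma]
  have hgen : ∀ a : α, Nat.card (T a) ≤ n ^ (m + 1) := by
    intro a
    have : Nat.card (T a) ≤ Nat.card ({b : α // b ≠ a} → Fin n) := by
      apply Nat.card_le_card_of_injective (fun f => fun b => f.1 b.1)
      intro f g h
      apply Subtype.ext; funext b
      by_cases hb : b = a
      · rw [hb, f.2.1, g.2.1]
      · exact congrFun h ⟨b, hb⟩
    calc Nat.card (T a) ≤ _ := this
      _ = n ^ (m + 1) := by
          rw [Nat.card_eq_fintype_card, Fintype.card_fun, Fintype.card_fin,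
            Fintype.card_subtype_compl, Fintype.card_subtype_eq, hm]
          norm_num
  have hx : Nat.card (T x) ≤ d * n ^ m := by
    have : Nat.card (T x) ≤ Nat.card ((G.neighborSet v) × ({b : α // b ≠ x ∧ b ≠ y} → Fin n)) := by
      apply Nat.card_le_card_of_injective
        (fun f => (⟨f.1 y, by
          have h := f.2.2 he
          rwa [f.2.1] at h⟩, fun b => f.1 b.1))
      intro f g h
      rw [Prod.mk.injEq] at h
      obtain ⟨h1, h2⟩ := h
      apply Subtype.ext; funext b
      by_cases hb : b = x
      · rw [hb, f.2.1, g.2.1]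
      · by_cases hb' : b = y
        · rw [hb']; exact congrArg Subtype.val h1
        · exact congrFun h2 ⟨b, hb, hb'⟩
    calc Nat.card (T x) ≤ _ := this
      _ = d * n ^ m := by
          rw [Nat.card_prod, Nat.card_eq_fintype_card (α := _ → Fin n), Fintype.card_fun,
            Fintype.card_fin, Nat.card_coe_set_eq]
          congr 1
          have hcard : Fintype.card {b : α // b ≠ x ∧ b ≠ y} = m := by
            have heq : (Finset.univ.filter fun b : α => b ≠ x ∧ b ≠ y)
                = Finset.univ \ {x, y} := by
              ext b; simp [not_or]
            rw [Fintype.card_subtype, heq, Finset.card_sdiff_of_subset (by simp),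
              Finset.card_univ, hm]
            simp [Finset.card_insert_of_notMem, hxy]
          rw [hcard]
  have hsum : ∑ a : α, Nat.card (T a) ≤ d * n ^ m + (m + 1) * n ^ (m + 1) := by
    rw [← Finset.sum_erase_add Finset.univ _ (Finset.mem_univ x)]
    have h1 : ∑ a ∈ Finset.univ.erase x, Nat.card (T a) ≤ (m + 1) * n ^ (m + 1) := by
      calc ∑ a ∈ Finset.univ.erase x, Nat.card (T a)
          ≤ ∑ _a ∈ Finset.univ.erase x, n ^ (m + 1) :=
            Finset.sum_le_sum fun a _ => hgen a
        _ = (Finset.univ.erase x).card * n ^ (m + 1) := by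
            rw [Finset.sum_const, smul_eq_mul]
        _ = (m + 1) * n ^ (m + 1) := by
            rw [Finset.card_erase_of_mem (Finset.mem_univ x), Finset.card_univ, hm]
            norm_num
    rw [add_comm (d * n ^ m)]
    exact Nat.add_le_add h1 hx
  have hnat : Nat.card {f : α → Fin n // Function.Injective f ∧
        (∀ ⦃a b⦄, H.Adj a b → G.Adj (f a) (f b)) ∧ v ∈ Set.range f}
      ≤ d * n ^ m + (m + 1) * n ^ (m + 1) :=
    hinj.trans (by rw [hsig]; exact hsum)
  rw [hm]
  have hexp1 : m + 2 - 1 = m + 1 := rfl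
  have hexp2 : m + 2 - 2 = m := rfl
  rw [hexp1, hexp2]
  have hR : (Nat.card {f : α → Fin n // Function.Injective f ∧
        (∀ ⦃a b⦄, H.Adj a b → G.Adj (f a) (f b)) ∧ v ∈ Set.range f} : ℝ)
      ≤ (d : ℝ) * (n : ℝ) ^ m + ((m : ℝ) + 1) * (n : ℝ) ^ (m + 1) := by
    exact_mod_cast hnat
  have hps : (n : ℝ) ^ (m + 1) = (n : ℝ) ^ m * n := pow_succ _ _
  push_cast
  nlinarith [hR, hps]
end

section
/- Let H be a graph, let r ≥ 2, and let G be an n-vertex K_{r+1}-free graph that maximizes inj(H,·) among all n-vertex K_{r+1}-free graphs. Then for every pair of vertices u, v ∈ V(G), the number of injective homomorphisms from H to G whose image contains v is at least the number of injective homomorphisms from H to G whose image contains u, minus v(H)²·n^{v(H)−2}. -/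
open SimpleGraph

/-- The number of injective homomorphisms from `H` to `G`. -/
noncomputable def injCount {α β : Type*} (H : SimpleGraph α) (G : SimpleGraph β) : ℕ :=
  Nat.card {f : α → β // Function.Injective f ∧ ∀ ⦃a b⦄, H.Adj a b → G.Adj (f a) (f b)}

/-!
Zykov symmetrization. Replace `v` by a non-adjacent clone of `u`; the result `G'` is still
`K_{r+1}`-free, so `inj(H, G') ≤ inj(H, G)`. Copies of `H` avoiding `v` are the same in `G` and
`G'`, hence `G'` has at most as many copies through `v` as `G`. Composing with the transposition
`(u v)` sends the copies in `G` through `u` but not `v` injectively to copies in `G'` through `v`,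
and the copies in `G` through both `u` and `v` number at most `v(H)² n^{v(H)-2}` (choose the two
preimages, then the rest of the map).
-/

theorem Nat.card_subtype_eq_card_and_add_card_and_not {γ : Type*} [Finite γ] (p q : γ → Prop) :
    Nat.card {x // p x} = Nat.card {x // p x ∧ q x} + Nat.card {x // p x ∧ ¬q x} := by
  classical
  rw [← Nat.card_congr (Equiv.sumCompl fun x : {x // p x} => q x), Nat.card_sum,
    Nat.card_congr (Equiv.subtypeSubtypeEquivSubtypeInter p q),
    Nat.card_congr (Equiv.subtypeSubtypeEquivSubtypeInter p (¬q ·))]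

section CountingMaps

variable {α β : Type*} [Fintype α] [Fintype β]

theorem card_fun_apply_eq_and_apply_eq_le {a b : α} (hab : a ≠ b) (u v : β) :
    Nat.card {f : α → β // f a = u ∧ f b = v} ≤ Fintype.card β ^ (Fintype.card α - 2) := by
  classical
  have hres : Function.Injective fun (f : {f : α → β // f a = u ∧ f b = v})
      (x : {x // x ∉ ({a, b} : Finset α)}) => f.1 x := by
    rintro ⟨f, hfa, hfb⟩ ⟨g, hga, hgb⟩ hfg
    ext x
    by_cases hx : x ∈ ({a, b} : Finset α)
    · simp only [Finset.mem_insert, Finset.mem_singleton] at hx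
      rcases hx with rfl | rfl <;> simp [*]
    · exact congrFun hfg ⟨x, hx⟩
  calc _ ≤ Nat.card ({x // x ∉ ({a, b} : Finset α)} → β) := Nat.card_le_card_of_injective _ hres
    _ = _ := by
      rw [Nat.card_eq_fintype_card, Fintype.card_fun, Fintype.card_subtype_compl,
        Fintype.card_coe, Finset.card_pair hab]

theorem card_fun_mem_range_and_mem_range_le {u v : β} (huv : u ≠ v) :
    Nat.card {f : α → β // u ∈ Set.range f ∧ v ∈ Set.range f} ≤
      Fintype.card α ^ 2 * Fintype.card β ^ (Fintype.card α - 2) := by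
  classical
  let pick (f : {f : α → β // u ∈ Set.range f ∧ v ∈ Set.range f}) :
      Σ p : {p : α × α // p.1 ≠ p.2}, {g : α → β // g p.1.1 = u ∧ g p.1.2 = v} :=
    ⟨⟨(f.2.1.choose, f.2.2.choose), fun h => huv (f.2.1.choose_spec.symm.trans
      ((congrArg f.1 h).trans f.2.2.choose_spec))⟩, f.1, f.2.1.choose_spec, f.2.2.choose_spec⟩
  have hpick : Function.Injective pick := fun f g h =>
    Subtype.ext (congrArg (fun x => x.2.1) h)
  calc _ ≤ _ := Nat.card_le_card_of_injective pick hpick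
    _ = ∑ p : {p : α × α // p.1 ≠ p.2}, Nat.card {g : α → β // g p.1.1 = u ∧ g p.1.2 = v} :=
      Nat.card_sigma
    _ ≤ ∑ _p : {p : α × α // p.1 ≠ p.2}, Fintype.card β ^ (Fintype.card α - 2) :=
      Finset.sum_le_sum fun p _ => card_fun_apply_eq_and_apply_eq_le p.2 u v
    _ ≤ Fintype.card α ^ 2 * Fintype.card β ^ (Fintype.card α - 2) := by
      rw [Finset.sum_const, smul_eq_mul, Finset.card_univ, sq, ← Fintype.card_prod]
      exact Nat.mul_le_mul_right _ (Fintype.card_subtype_le _)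

end CountingMaps

namespace SimpleGraph

variable {V : Type*} [DecidableEq V] (G : SimpleGraph V) {s t : V}

theorem adj_replaceVertex_swap_iff {x y : V} (hx : x ≠ t) (hy : y ≠ t) :
    (G.replaceVertex s t).Adj (Equiv.swap s t x) (Equiv.swap s t y) ↔ G.Adj x y := by
  unfold replaceVertex
  simp only [Equiv.swap_apply_def]
  split_ifs <;> simp_all [adj_comm]

end SimpleGraph

def IsInjHom {α β : Type*} (H : SimpleGraph α) (G : SimpleGraph β) (f : α → β) : Prop :=
  Function.Injective f ∧ ∀ ⦃a b⦄, H.Adj a b → G.Adj (f a) (f b)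

section ReplaceVertex

variable {α V : Type*} [DecidableEq V] {H : SimpleGraph α} {G : SimpleGraph V} {s t : V}
  {f : α → V}

theorem isInjHom_replaceVertex_iff (ht : t ∉ Set.range f) :
    IsInjHom H (G.replaceVertex s t) f ↔ IsInjHom H G f := by
  have hf a : f a ≠ t := fun h => ht ⟨a, h⟩
  simp only [IsInjHom, G.adj_replaceVertex_iff_of_ne s (hf _) (hf _)]

theorem IsInjHom.swap_comp_replaceVertex (hf : IsInjHom H G f) (ht : t ∉ Set.range f) :
    IsInjHom H (G.replaceVertex s t) (Equiv.swap s t ∘ f) := by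
  have hf' a : f a ≠ t := fun h => ht ⟨a, h⟩
  exact ⟨(Equiv.injective _).comp hf.1,
    fun a b hab => (G.adj_replaceVertex_swap_iff (hf' a) (hf' b)).2 (hf.2 hab)⟩

variable [Fintype α] [Fintype V]

theorem card_isInjHom_replaceVertex_mem_range_le
    (hle : injCount H (G.replaceVertex s t) ≤ injCount H G) :
    Nat.card {f // IsInjHom H (G.replaceVertex s t) f ∧ t ∈ Set.range f} ≤
      Nat.card {f // IsInjHom H G f ∧ t ∈ Set.range f} := by
  have havoid : Nat.card {f // IsInjHom H (G.replaceVertex s t) f ∧ t ∉ Set.range f} =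
      Nat.card {f // IsInjHom H G f ∧ t ∉ Set.range f} :=
    Nat.card_congr <| Equiv.subtypeEquivRight fun _ =>
      and_congr_left isInjHom_replaceVertex_iff
  have hsplit := Nat.card_subtype_eq_card_and_add_card_and_not (IsInjHom H G) (t ∈ Set.range ·)
  have hsplit' := Nat.card_subtype_eq_card_and_add_card_and_not
    (IsInjHom H (G.replaceVertex s t)) (t ∈ Set.range ·)
  change Nat.card {f // IsInjHom H _ f} ≤ Nat.card {f // IsInjHom H G f} at hle
  omega

theorem card_isInjHom_mem_range_and_not_mem_range_le :
    Nat.card {f // (IsInjHom H G f ∧ s ∈ Set.range f) ∧ t ∉ Set.range f} ≤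
      Nat.card {f // IsInjHom H (G.replaceVertex s t) f ∧ t ∈ Set.range f} := by
  refine Nat.card_le_card_of_injective (fun f => ⟨Equiv.swap s t ∘ f.1,
    f.2.1.1.swap_comp_replaceVertex f.2.2, ?_⟩)
    fun f g h => Subtype.ext <| (Equiv.swap s t).injective.comp_left (congrArg Subtype.val h)
  obtain ⟨a, ha⟩ := f.2.1.2
  exact ⟨a, by simp [ha]⟩

theorem card_isInjHom_mem_range_le_add
    (hle : injCount H (G.replaceVertex s t) ≤ injCount H G) :
    Nat.card {f // IsInjHom H G f ∧ s ∈ Set.range f} ≤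
      Nat.card {f // IsInjHom H G f ∧ t ∈ Set.range f} +
        Fintype.card α ^ 2 * Fintype.card V ^ (Fintype.card α - 2) := by
  obtain rfl | hst := eq_or_ne s t
  · exact Nat.le_add_right _ _
  have hsplit := Nat.card_subtype_eq_card_and_add_card_and_not
    (fun f => IsInjHom H G f ∧ s ∈ Set.range f) (t ∈ Set.range ·)
  have hboth : Nat.card {f // (IsInjHom H G f ∧ s ∈ Set.range f) ∧ t ∈ Set.range f} ≤
      Fintype.card α ^ 2 * Fintype.card V ^ (Fintype.card α - 2) :=
    (Nat.card_le_card_of_injective _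
      (Subtype.impEmbedding _ _ fun _ hf => ⟨hf.1.2, hf.2⟩).injective).trans
      (card_fun_mem_range_and_mem_range_le hst)
  have hswap := card_isInjHom_mem_range_and_not_mem_range_le (H := H) (G := G) (s := s) (t := t)
  have hclone := card_isInjHom_replaceVertex_mem_range_le hle
  omega

end ReplaceVertex

theorem popular_vertices_balanced_general {α : Type*} [Fintype α] (H : SimpleGraph α)
    (r n : ℕ) (G : SimpleGraph (Fin n)) (hfree : G.CliqueFree (r + 1))
    (hmax : ∀ G' : SimpleGraph (Fin n), G'.CliqueFree (r + 1) →
      injCount H G' ≤ injCount H G)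
    (u v : Fin n) :
    (Nat.card {f : α → Fin n // Function.Injective f ∧
        (∀ ⦃a b⦄, H.Adj a b → G.Adj (f a) (f b)) ∧ u ∈ Set.range f} : ℝ) -
      (Fintype.card α : ℝ) ^ 2 * (n : ℝ) ^ (Fintype.card α - 2) ≤
    (Nat.card {f : α → Fin n // Function.Injective f ∧
        (∀ ⦃a b⦄, H.Adj a b → G.Adj (f a) (f b)) ∧ v ∈ Set.range f} : ℝ) := by
  have key := card_isInjHom_mem_range_le_add (H := H) (s := u) (t := v)
    (hmax _ (hfree.replaceVertex u v))
  simp only [IsInjHom, and_assoc, Fintype.card_fin] at key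
  rw [sub_le_iff_le_add]
  exact_mod_cast key

/-- If `r ≥ 2` and `G` is an `n`-vertex `K_{r+1}`-free graph maximizing `inj(H,·)` among
all `n`-vertex `K_{r+1}`-free graphs, then for every pair of vertices `u, v`, the number
of injective homomorphisms whose image contains `v` is at least the number whose image
contains `u`, minus `v(H)²·n^{v(H)−2}`. -/
theorem popular_vertices_balanced {α : Type*} [Fintype α] (H : SimpleGraph α)
    (r n : ℕ) (hr : 2 ≤ r) (G : SimpleGraph (Fin n)) (hfree : G.CliqueFree (r + 1))
    (hmax : ∀ G' : SimpleGraph (Fin n), G'.CliqueFree (r + 1) →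
      injCount H G' ≤ injCount H G)
    (u v : Fin n) :
    (Nat.card {f : α → Fin n // Function.Injective f ∧
        (∀ ⦃a b⦄, H.Adj a b → G.Adj (f a) (f b)) ∧ u ∈ Set.range f} : ℝ) -
      (Fintype.card α : ℝ) ^ 2 * (n : ℝ) ^ (Fintype.card α - 2) ≤
    (Nat.card {f : α → Fin n // Function.Injective f ∧
        (∀ ⦃a b⦄, H.Adj a b → G.Adj (f a) (f b)) ∧ v ∈ Set.range f} : ℝ) :=
  popular_vertices_balanced_general H r n G hfree hmax u v
end

section
/- Let H be a graph with at least one edge, let r ≥ 300·v(H)^9, let n ≥ r+1, and let G be an n-vertex K_{r+1}-free graph that maximizes inj(H,·) among all n-vertex K_{r+1}-free graphs. Then every vertex v of G satisfies deg(v) ≥ (1 − 1/(100·v(H)^6))·n; in particular G is (1/(100·v(H)^6))-dense. -/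
/-!
Write `N` for the number of labelled copies of `H` in `G`, `N_v` for those through a vertex `v`,
and `k = v(H)`. Replacing `v` by a clone of another vertex `u` keeps `G` `K_{r+1}`-free, so by
maximality the copies avoiding `v` but using `u` number at most `N_v`; summing over `u` gives
`k N ≤ (k + n - 1) N_v`. A copy through `v` either sends an endpoint of a fixed edge of `H` to `v`,
and then the other endpoint into the neighbourhood of `v`, or sends one of the other `k - 2`
vertices to `v`, so `N_v ≤ (2 deg v + (k - 2) n) n^(k-2)`. Finally `N` is at least the count in
the Turán graph `T_r(n)`, where at most `k² n (n/r + 1) n^(k-2)` of the `n^k` maps fail to be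
copies. For `r ≥ 300 k^9` these three bounds force `deg v ≥ (1 - 1/(100 k^6)) n`.
-/

open SimpleGraph

open Finset Fintype

lemma SimpleGraph.adj_replaceVertex_swap {V : Type*} [DecidableEq V] {G : SimpleGraph V}
    {u v x y : V} (hx : x ≠ v) (hy : y ≠ v) (h : G.Adj x y) :
    (G.replaceVertex u v).Adj (Equiv.swap u v x) (Equiv.swap u v y) := by
  rcases eq_or_ne u x with rfl | hxu
  · rwa [Equiv.swap_apply_left, Equiv.swap_apply_of_ne_of_ne h.ne' hy,
      G.adj_replaceVertex_iff_of_ne_right u hy]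
  rcases eq_or_ne u y with rfl | hyu
  · rw [Equiv.swap_apply_left, Equiv.swap_apply_of_ne_of_ne hxu.symm hx, adj_comm,
      G.adj_replaceVertex_iff_of_ne_right u hx]
    exact h.symm
  · rwa [Equiv.swap_apply_of_ne_of_ne hxu.symm hx, Equiv.swap_apply_of_ne_of_ne hyu.symm hy,
      G.adj_replaceVertex_iff_of_ne u hx hy]

lemma card_filter_fin_modEq_le {n r : ℕ} (hr : 0 < r) (c : ℕ) :
    #{y : Fin n | (y : ℕ) ≡ c [MOD r]} ≤ n / r + 1 := by
  have hcount : #{y : Fin n | (y : ℕ) ≡ c [MOD r]} = n.count (· ≡ c [MOD r]) := by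
    rw [Nat.count_eq_card_filter_range, ← Nat.Iio_eq_range, ← Fin.map_valEmbedding_univ,
      filter_map, card_map]
    rfl
  rw [hcount, Nat.count_modEq_card _ hr]
  split_ifs <;> omega

lemma card_not_adj_turanGraph_le {n r : ℕ} (hr : 0 < r) :
    #{p : Fin n × Fin n | ¬ (turanGraph n r).Adj p.1 p.2} ≤ n * (n / r + 1) := by
  rw [card_filter, Fintype.sum_prod_type]
  calc ∑ x : Fin n, ∑ y : Fin n, (if ¬ (turanGraph n r).Adj x y then 1 else 0)
      = ∑ x : Fin n, #{y : Fin n | (y : ℕ) ≡ x [MOD r]} := by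
        simp_rw [card_filter, turanGraph_adj, not_not, Nat.ModEq, eq_comm]
    _ ≤ ∑ _x : Fin n, (n / r + 1) := sum_le_sum fun x _ => card_filter_fin_modEq_le hr x
    _ = n * (n / r + 1) := by simp

namespace InjHom

open scoped Classical

variable {α β : Type*} [Fintype α]

lemma sum_card_filter_mem_range [DecidableEq β] {t : Finset (α → β)} {s : Finset β}
    (ht : ∀ f ∈ t, Function.Injective f ∧ ∀ x, f x ∈ s) :
    ∑ u ∈ s, #{f ∈ t | u ∈ Set.range f} = #t * card α := by
  have := sum_card_bipartiteAbove_eq_sum_card_bipartiteBelow (s := s) (t := t)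
    (r := fun u f => u ∈ Set.range f)
  simp only [bipartiteAbove, bipartiteBelow] at this
  rw [this, card_eq_sum_ones, sum_mul, one_mul]
  refine sum_congr rfl fun f hf => ?_
  obtain ⟨hinj, hs⟩ := ht f hf
  rw [← card_univ, ← card_image_of_injective univ hinj]
  congr 1
  ext u
  simp only [mem_filter, Set.mem_range, mem_image, mem_univ, true_and, and_iff_right_iff_imp]
  rintro ⟨x, rfl⟩
  exact hs x

variable [Fintype β]

noncomputable def labelledCopies (H : SimpleGraph α) (G : SimpleGraph β) : Finset (α → β) :=
  {f | Function.Injective f ∧ ∀ ⦃a b⦄, H.Adj a b → G.Adj (f a) (f b)}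

variable {H : SimpleGraph α} {G : SimpleGraph β}

@[simp]
lemma mem_labelledCopies {f : α → β} :
    f ∈ labelledCopies H G ↔
      Function.Injective f ∧ ∀ ⦃a b⦄, H.Adj a b → G.Adj (f a) (f b) := by
  simp [labelledCopies]

lemma injCount_eq_card_labelledCopies (H : SimpleGraph α) (G : SimpleGraph β) :
    injCount H G = #(labelledCopies H G) := by
  rw [injCount, Nat.card_eq_fintype_card, Fintype.card_subtype]
  rfl

lemma card_le_card_mul_pow_of_apply_mem {t : Finset (α → β)} {a b : α} (hab : a ≠ b)
    {S : Finset (β × β)} (ht : ∀ f ∈ t, (f a, f b) ∈ S) :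
    #t ≤ #S * card β ^ (card α - 2) := by
  have hcard : card (({a, b}ᶜ : Finset α) → β) = card β ^ (card α - 2) := by
    rw [Fintype.card_fun, Fintype.card_coe, card_compl, card_pair hab]
  rw [← hcard, ← card_univ, ← card_product]
  refine card_le_card_of_injOn (fun f => ((f a, f b), fun x => f x)) ?_ ?_
  · intro f hf
    simpa using ht f hf
  · intro f _ g _ hfg
    simp only [Prod.mk.injEq, funext_iff, Subtype.forall, mem_compl, mem_insert,
      mem_singleton, not_or] at hfg
    obtain ⟨⟨hfa, hfb⟩, hrest⟩ := hfg
    funext x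
    by_cases hxa : x = a
    · rwa [hxa]
    by_cases hxb : x = b
    · rwa [hxb]
    exact hrest x ⟨hxa, hxb⟩

lemma pow_le_card_labelledCopies_add (H : SimpleGraph α) (G : SimpleGraph β)
    [DecidableRel G.Adj] :
    card β ^ card α ≤ #(labelledCopies H G) +
      card α ^ 2 * #{p : β × β | ¬ G.Adj p.1 p.2} * card β ^ (card α - 2) := by
  set bad : Finset (β × β) := {p | ¬ G.Adj p.1 p.2}
  set badAt : α × α → Finset (α → β) := fun ab => {f | (f ab.1, f ab.2) ∈ bad}
  have hcover : univ ⊆ labelledCopies H G ∪ univ.offDiag.biUnion badAt := by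
    intro f _
    by_cases hf : f ∈ labelledCopies H G
    · exact mem_union_left _ hf
    refine mem_union_right _ ?_
    simp only [mem_labelledCopies, not_and_or, Function.Injective, not_forall] at hf
    obtain ⟨a, b, hab, hne⟩ | ⟨a, b, hadj, hnadj⟩ := hf
    · exact mem_biUnion.2 ⟨(a, b), by simpa using hne, by simp [badAt, bad, hab]⟩
    · exact mem_biUnion.2 ⟨(a, b), by simpa using hadj.ne, by simpa [badAt, bad] using hnadj⟩
  calc card β ^ card α = #(univ : Finset (α → β)) := by simp
    _ ≤ #(labelledCopies H G) + ∑ ab ∈ univ.offDiag, #(badAt ab) :=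
        (card_le_card hcover).trans ((card_union_le _ _).trans (by gcongr; exact card_biUnion_le))
    _ ≤ #(labelledCopies H G) + ∑ _ab ∈ univ.offDiag, #bad * card β ^ (card α - 2) := by
        gcongr with ab hab
        exact card_le_card_mul_pow_of_apply_mem (mem_offDiag.1 hab).2.2
          fun f hf => (mem_filter.1 hf).2
    _ ≤ _ := by
        rw [sum_const, smul_eq_mul, offDiag_card, card_univ, ← mul_assoc, sq]
        gcongr
        exact Nat.sub_le _ _

lemma card_pow_le_card_labelledCopies_turanGraph_add (H : SimpleGraph α) {n r : ℕ}
    (hr : 0 < r) :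
    n ^ card α ≤ #(labelledCopies H (turanGraph n r)) +
      card α ^ 2 * (n * (n / r + 1)) * n ^ (card α - 2) := by
  have h := pow_le_card_labelledCopies_add H (turanGraph n r)
  rw [Fintype.card_fin] at h
  exact h.trans (by gcongr; exact card_not_adj_turanGraph_le hr)

variable [DecidableEq β]

lemma card_filter_apply_eq_le_of_adj {a b : α} (hab : H.Adj a b) (v : β) :
    #{f ∈ labelledCopies H G | f a = v} ≤ G.degree v * card β ^ (card α - 2) := by
  refine (card_le_card_mul_pow_of_apply_mem (S := {v} ×ˢ G.neighborFinset v) hab.ne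
    fun f hf => ?_).trans (by simp)
  simp only [mem_filter, mem_labelledCopies] at hf
  obtain ⟨⟨_, hhom⟩, rfl⟩ := hf
  simpa using hhom hab

lemma card_filter_apply_eq_le {a b : α} (hab : a ≠ b) (t : Finset (α → β)) (v : β) :
    #{f ∈ t | f a = v} ≤ card β * card β ^ (card α - 2) := by
  refine (card_le_card_mul_pow_of_apply_mem (S := {v} ×ˢ univ) hab
    fun f hf => ?_).trans (by simp)
  simp_all

lemma card_filter_mem_range_le {a b : α} (hab : H.Adj a b) (v : β) :
    #{f ∈ labelledCopies H G | v ∈ Set.range f} ≤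
      (2 * G.degree v + (card α - 2) * card β) * card β ^ (card α - 2) := by
  set t := labelledCopies H G
  set rest := (univ.erase a).erase b
  have hcover : {f ∈ t | v ∈ Set.range f} = univ.biUnion fun x => {f ∈ t | f x = v} := by
    ext f
    simp
  have hrest : #rest = card α - 2 := by
    rw [card_erase_of_mem (mem_erase.2 ⟨hab.ne.symm, mem_univ b⟩),
      card_erase_of_mem (mem_univ a), card_univ, Nat.sub_sub]
  calc #{f ∈ t | v ∈ Set.range f} ≤ ∑ x, #{f ∈ t | f x = v} := hcover ▸ card_biUnion_le
    _ = #{f ∈ t | f a = v} + #{f ∈ t | f b = v} + ∑ x ∈ rest, #{f ∈ t | f x = v} := by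
        rw [← add_sum_erase _ _ (mem_univ a),
          ← add_sum_erase _ _ (mem_erase.2 ⟨hab.ne.symm, mem_univ b⟩), add_assoc]
    _ ≤ G.degree v * card β ^ (card α - 2) + G.degree v * card β ^ (card α - 2) +
          ∑ _x ∈ rest, card β * card β ^ (card α - 2) := by
        gcongr with x hx
        · exact card_filter_apply_eq_le_of_adj hab v
        · exact card_filter_apply_eq_le_of_adj hab.symm v
        · exact card_filter_apply_eq_le (ne_of_mem_erase (mem_of_mem_erase hx)) t v
    _ = _ := by
        rw [sum_const, hrest, smul_eq_mul]
        ring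

lemma filter_labelledCopies_replaceVertex_not_mem_range (u v : β) :
    {f ∈ labelledCopies H (G.replaceVertex u v) | v ∉ Set.range f} =
      {f ∈ labelledCopies H G | v ∉ Set.range f} := by
  ext f
  simp only [mem_filter, mem_labelledCopies, Set.mem_range, not_exists]
  constructor <;> rintro ⟨⟨hinj, hhom⟩, hv⟩ <;>
    refine ⟨⟨hinj, fun a b hab => ?_⟩, hv⟩
  · exact (G.adj_replaceVertex_iff_of_ne u (hv a) (hv b)).1 (hhom hab)
  · exact (G.adj_replaceVertex_iff_of_ne u (hv a) (hv b)).2 (hhom hab)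

lemma card_filter_mem_range_le_replaceVertex {u v : β} :
    #{f ∈ labelledCopies H G | v ∉ Set.range f ∧ u ∈ Set.range f} ≤
      #{f ∈ labelledCopies H (G.replaceVertex u v) | v ∈ Set.range f} := by
  refine card_le_card_of_injOn (fun f => Equiv.swap u v ∘ f) (fun f hf => ?_)
    (Equiv.injective _).comp_left.injOn
  simp only [coe_filter, mem_labelledCopies, Set.mem_ofPred_eq, Set.mem_range,
    not_exists] at hf ⊢
  obtain ⟨⟨hinj, hhom⟩, hv, a, rfl⟩ := hf
  exact ⟨⟨(Equiv.injective _).comp hinj, fun x y hxy => adj_replaceVertex_swap (hv x) (hv y)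
    (hhom hxy)⟩, a, by simp⟩

lemma card_labelledCopies_mul_le (v : β)
    (hmax : ∀ u ≠ v, #(labelledCopies H (G.replaceVertex u v)) ≤ #(labelledCopies H G)) :
    #(labelledCopies H G) * card α ≤
      (card α + (card β - 1)) * #{f ∈ labelledCopies H G | v ∈ Set.range f} := by
  set t := labelledCopies H G
  set hit := {f ∈ t | v ∈ Set.range f}
  set avoid := {f ∈ t | v ∉ Set.range f}
  have hsplit : #hit + #avoid = #t := card_filter_add_card_filter_not _
  have hcompare : ∀ u ∈ univ.erase v, #{f ∈ avoid | u ∈ Set.range f} ≤ #hit := by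
    intro u hu
    -- cloning `u` onto `v` keeps the copies avoiding `v` and moves those through `u` onto `v`
    have hsplit' : #{f ∈ labelledCopies H (G.replaceVertex u v) | v ∈ Set.range f} + #avoid =
        #(labelledCopies H (G.replaceVertex u v)) := by
      have := card_filter_add_card_filter_not (s := labelledCopies H (G.replaceVertex u v))
        (fun f => v ∈ Set.range f)
      rwa [filter_labelledCopies_replaceVertex_not_mem_range] at this
    have hswap : #{f ∈ avoid | u ∈ Set.range f} ≤
        #{f ∈ labelledCopies H (G.replaceVertex u v) | v ∈ Set.range f} := by
      rw [filter_filter]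
      exact card_filter_mem_range_le_replaceVertex
    have := hmax u (ne_of_mem_erase hu)
    omega
  have hdouble : #avoid * card α ≤ (card β - 1) * #hit := by
    rw [← sum_card_filter_mem_range (s := univ.erase v) fun f hf => ?_]
    · calc ∑ u ∈ univ.erase v, #{f ∈ avoid | u ∈ Set.range f}
            ≤ ∑ _u ∈ univ.erase v, #hit := sum_le_sum hcompare
        _ = (card β - 1) * #hit := by rw [sum_const, card_erase_of_mem (mem_univ v), card_univ,
            smul_eq_mul]
    · simp only [avoid, t, mem_filter, mem_labelledCopies, Set.mem_range, not_exists] at hf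
      exact ⟨hf.1.1, fun x => mem_erase.2 ⟨hf.2 x, mem_univ _⟩⟩
  calc #t * card α = #hit * card α + #avoid * card α := by rw [← hsplit, add_mul]
    _ ≤ #hit * card α + (card β - 1) * #hit := by gcongr
    _ = (card α + (card β - 1)) * #hit := by ring

end InjHom

open InjHom

lemma one_sub_one_div_mul_le_of_mul_sq_le {k n m d : ℕ} (hk : 2 ≤ k)
    (hm : 300 * k ^ 9 * m ≤ n) (hn : 300 * k ^ 9 < n)
    (h : k * n ^ 2 ≤ (k + (n - 1)) * (2 * d + (k - 2) * n) + k ^ 3 * n * (m + 1)) :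
    (1 - 1 / (100 * (k : ℝ) ^ 6)) * n ≤ d := by
  have hR := (Nat.cast_le (α := ℝ)).2 h
  have hR' := (Nat.cast_le (α := ℝ)).2 hm
  have hn' := (Nat.cast_lt (α := ℝ)).2 hn
  have hk' := (Nat.cast_le (α := ℝ)).2 hk
  push_cast [Nat.cast_sub hk, Nat.cast_sub (by omega : 1 ≤ n)] at hR hR' hn' hk'
  set K : ℝ := (k : ℝ)
  set X : ℝ := (n : ℝ)
  set E : ℝ := 100 * K ^ 6
  have hE0 : 0 < E := by positivity
  have hX0 : 0 < X := by linarith [show 0 < K ^ 9 by positivity]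
  by_contra! hd
  have hED : E * d < (E - 1) * X := by
    rw [one_sub_div hE0.ne', div_mul_eq_mul_div, lt_div_iff₀ hE0] at hd
    linarith
  have hA : E * K * X ^ 2 < (K + X - 1) * (E * K - 2) * X + E * K ^ 3 * X * (m + 1) := by
    nlinarith [mul_lt_mul_of_pos_left hED (by linarith : 0 < K + X - 1)]
  have hB : E * K * X < (K + X - 1) * (E * K - 2) + E * K ^ 3 * (m + 1) :=
    lt_of_mul_lt_mul_right (by linarith) hX0.le
  have hC : 2 * X < E * K ^ 3 * m + 2 * E * K ^ 3 := by
    nlinarith [show K ^ 2 ≤ K ^ 3 by nlinarith]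
  have hEK : E * K ^ 3 = 100 * K ^ 9 := by ring
  rw [hEK] at hC
  linarith

/-- Let `H` have at least one edge, `r ≥ 300·v(H)^9`, `n ≥ r+1`, and let `G` be an
`n`-vertex `K_{r+1}`-free graph maximizing `inj(H,·)` among all `n`-vertex `K_{r+1}`-free
graphs.  Then every vertex `v` of `G` satisfies `deg(v) ≥ (1 − 1/(100·v(H)^6))·n`,
i.e. `G` is `1/(100·v(H)^6)`-dense. -/
theorem extremal_graph_dense {α : Type*} [Fintype α] (H : SimpleGraph α)
    (hH : H.edgeSet.Nonempty) (r n : ℕ)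
    (hr : 300 * (Fintype.card α) ^ 9 ≤ r) (hn : r + 1 ≤ n)
    (G : SimpleGraph (Fin n)) (hfree : G.CliqueFree (r + 1))
    (hmax : ∀ G' : SimpleGraph (Fin n), G'.CliqueFree (r + 1) →
      injCount H G' ≤ injCount H G) :
    ∀ v : Fin n, (1 - 1 / (100 * (Fintype.card α : ℝ) ^ 6)) * (n : ℝ) ≤
      ((G.neighborSet v).ncard : ℝ) := by
  classical
  intro v
  obtain ⟨a, b, hab⟩ : ∃ a b, H.Adj a b := by
    obtain ⟨e, he⟩ := hH
    induction e using Sym2.ind with | h a b => exact ⟨a, b, he⟩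
  set k := Fintype.card α
  have hk : 2 ≤ k := Fintype.one_lt_card_iff_nontrivial.2 ⟨a, b, hab.ne⟩
  have hr0 : 0 < r := lt_of_lt_of_le (by positivity) hr
  simp only [injCount_eq_card_labelledCopies] at hmax
  have hsym := card_labelledCopies_mul_le v fun u _ => hmax _ (hfree.replaceVertex u v)
  have hhit := card_filter_mem_range_le (G := G) hab v
  have hturan := (card_pow_le_card_labelledCopies_turanGraph_add H hr0).trans
    (Nat.add_le_add_right (hmax _ (turanGraph_cliqueFree hr0)) _)
  rw [Fintype.card_fin] at hsym hhit
  rw [← coe_neighborFinset, Set.ncard_coe_finset, card_neighborFinset_eq_degree]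
  refine one_sub_one_div_mul_le_of_mul_sq_le (m := n / r) hk ?_ (by omega) ?_
  · calc 300 * k ^ 9 * (n / r) ≤ r * (n / r) := Nat.mul_le_mul_right _ hr
      _ ≤ n := Nat.mul_div_le n r
  · have hnk : n ^ k = n ^ 2 * n ^ (k - 2) := by rw [← pow_add, Nat.add_sub_cancel' hk]
    refine Nat.le_of_mul_le_mul_right ?_ (pow_pos (by omega : 0 < n) (k - 2))
    rw [hnk] at hturan
    nlinarith [Nat.mul_le_mul_left k hturan, Nat.mul_le_mul_left (k + (n - 1)) hhit]
end

section
/- Let H be a graph with at least one edge, let δ > 0, let G be a δ-dense graph, and let v₁, v₂ ∈ V(G) be distinct non-adjacent vertices. Let G' be the graph obtained from G by adding the edge v₁v₂. Then inj(H,G') − inj(H,G) ≥ 2·e(H)·(1 − δ·v(H)²)·v(G)^{v(H)−2}. -/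
/-!
An injective homomorphism `H → G ⊔ edge v₁ v₂` sending a dart `(a, b)` of `H` onto `(v₁, v₂)`
is not one into `G`, and distinct darts give disjoint families, so the gain is at least the sum
over the `2 e(H)` darts of the number of such maps. Every map `f` with `f a = v₁`, `f b = v₂`
whose image is a clique of `G ⊔ edge v₁ v₂` qualifies, and among the `n^(k-2)` maps with these
two values the non-clique ones are bounded by a union bound over pairs `(w, u)` with `w ∉ {a, b}`:
given `f u`, at most `δ n` values of `f w` are non-neighbours of it (a vertex counting as its own
non-neighbour, which also takes care of injectivity). This gives at most `δ n^(k-2)` maps per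
pair and `δ k² n^(k-2)` in all.
-/

open SimpleGraph

open Finset Function

theorem card_filter_not_adj_le {V : Type*} [Fintype V] (G : SimpleGraph V) [DecidableRel G.Adj]
    {δ : ℝ} (hG : ∀ v, (1 - δ) * Fintype.card V ≤ (G.neighborSet v).ncard) (x : V) :
    (#{y | ¬G.Adj x y} : ℝ) ≤ δ * Fintype.card V := by
  have hdeg : (G.neighborSet x).ncard = #{y | G.Adj x y} := by
    rw [← Set.ncard_coe_finset]; congr 1; ext; simp
  have hsplit : (#{y | G.Adj x y} + #{y | ¬G.Adj x y} : ℝ) = Fintype.card V := by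
    exact_mod_cast (card_filter_add_card_filter_not (G.Adj x)).trans card_univ
  linarith [hdeg ▸ hG x]

section
variable {α V : Type*} [Fintype α] [DecidableEq α] [Fintype V] [DecidableEq V]

theorem card_filter_eqOn (s : Finset α) (g : α → V) :
    #{f : α → V | ∀ i ∈ s, f i = g i} = Fintype.card V ^ (Fintype.card α - #s) := by
  have hpi : ({f : α → V | ∀ i ∈ s, f i = g i} : Finset _) =
      Fintype.piFinset fun i => if i ∈ s then {g i} else univ := by
    ext f
    simp only [mem_filter, mem_univ, true_and, Fintype.mem_piFinset]
    refine forall_congr' fun i => ?_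
    split_ifs <;> simp [*]
  rw [hpi, Fintype.card_piFinset, ← card_compl, ← prod_const]
  simp only [apply_ite, card_singleton, card_univ, prod_ite, prod_const_one, one_mul, prod_const]
  congr 2
  ext; simp

theorem card_filter_eqOn_rel_le (s : Finset α) (g : α → V) {u w : α} (huw : u ≠ w)
    (R : V → V → Prop) [DecidableRel R] {m : ℝ} (hR : ∀ x, (#{y | R x y} : ℝ) ≤ m) :
    (#{f : α → V | (∀ i ∈ s, f i = g i) ∧ R (f u) (f w)} : ℝ) ≤
      m * Fintype.card V ^ (Fintype.card α - #(insert w s)) := by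
  set B : Finset (α → V) := {f | (∀ i ∈ s, f i = g i) ∧ R (f u) (f w)}
  have hmaps : (B : Set (α → V)).MapsTo (fun f => update f w (g w))
      ({f | ∀ i ∈ insert w s, f i = g i} : Finset (α → V)) := by
    intro f hf
    simp only [B, mem_coe, mem_filter, mem_univ, true_and] at hf ⊢
    refine forall_mem_insert .. |>.2 ⟨by simp, fun i hi => ?_⟩
    by_cases hiw : i = w
    · subst hiw; simp
    · rw [update_of_ne hiw, hf.1 i hi]
  have hfiber (h : α → V) : #{f ∈ B | update f w (g w) = h} ≤ #{y | R (h u) y} := by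
    refine (card_le_card fun f hf => ?_).trans (card_image_le (f := update h w))
    simp only [B, mem_filter, mem_univ, true_and] at hf
    obtain ⟨⟨-, hR⟩, rfl⟩ := hf
    simp only [mem_image, mem_filter, mem_univ, true_and]
    exact ⟨f w, by rwa [update_of_ne huw], by rw [update_idem, update_eq_self]⟩
  rw [card_eq_sum_card_fiberwise hmaps, ← Nat.cast_pow, ← card_filter_eqOn (insert w s) g,
    mul_comm, Nat.cast_sum, ← nsmul_eq_mul]
  exact sum_le_card_nsmul _ _ _ fun h _ => (Nat.cast_le.2 (hfiber h)).trans (hR _)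

theorem card_filter_eqOn_not_adj_le (G : SimpleGraph V) [DecidableRel G.Adj] {δ : ℝ}
    (hG : ∀ x, (#{y | ¬G.Adj x y} : ℝ) ≤ δ * Fintype.card V) (s : Finset α) (g : α → V)
    {u w : α} (huw : u ≠ w) (hw : w ∉ s) :
    (#{f : α → V | (∀ i ∈ s, f i = g i) ∧ ¬G.Adj (f u) (f w)} : ℝ) ≤
      δ * Fintype.card V ^ (Fintype.card α - #s) := by
  have hk : #s + 1 ≤ Fintype.card α := card_lt_univ_of_notMem hw
  calc _ ≤ δ * Fintype.card V * Fintype.card V ^ (Fintype.card α - #(insert w s)) :=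
        card_filter_eqOn_rel_le s g huw _ hG
    _ = δ * Fintype.card V ^ (Fintype.card α - #s) := by
        rw [card_insert_of_notMem hw, mul_assoc, ← pow_succ', Nat.sub_add_eq,
          Nat.sub_add_cancel (by omega)]

theorem card_filter_eqOn_pairwise_adj_ge (G : SimpleGraph V) [DecidableRel G.Adj] {δ : ℝ}
    (hδ : 0 ≤ δ) (hG : ∀ x, (#{y | ¬G.Adj x y} : ℝ) ≤ δ * Fintype.card V)
    (s : Finset α) (g : α → V) (hg : (s : Set α).Pairwise (G.Adj on g)) :
    (1 - δ * Fintype.card α ^ 2) * Fintype.card V ^ (Fintype.card α - #s) ≤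
      #{f : α → V | (∀ i ∈ s, f i = g i) ∧ ∀ ⦃u w⦄, u ≠ w → G.Adj (f u) (f w)} := by
  set N : ℝ := Fintype.card V ^ (Fintype.card α - #s)
  set bad : α × α → Finset (α → V) := fun p =>
    {f | (∀ i ∈ s, f i = g i) ∧ ¬G.Adj (f p.2) (f p.1)}
  set I : Finset (α × α) := {p | p.1 ∉ s ∧ p.2 ≠ p.1}
  have hcover : ({f | ∀ i ∈ s, f i = g i} : Finset (α → V)) ⊆
      ({f | (∀ i ∈ s, f i = g i) ∧ ∀ ⦃u w⦄, u ≠ w → G.Adj (f u) (f w)} : Finset (α → V)) ∪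
        I.biUnion bad := by
    intro f hf
    simp only [mem_filter, mem_univ, true_and] at hf
    by_cases hpw : ∀ ⦃u w⦄, u ≠ w → G.Adj (f u) (f w)
    · exact mem_union_left _ (mem_filter.2 ⟨mem_univ _, hf, hpw⟩)
    obtain ⟨u, w, huw, hnadj⟩ : ∃ u w, u ≠ w ∧ ¬G.Adj (f u) (f w) := by
      simpa using hpw
    simp only [mem_union, mem_biUnion, I, bad, mem_filter, mem_univ, true_and, Prod.exists]
    right
    by_cases hw : w ∈ s
    · by_cases hu : u ∈ s
      · exact absurd (hf u hu ▸ hf w hw ▸ hg hu hw huw) hnadj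
      · exact ⟨u, w, ⟨hu, huw.symm⟩, hf, fun h => hnadj h.symm⟩
    · exact ⟨w, u, ⟨hw, huw⟩, hf, hnadj⟩
  have hI : (#I : ℝ) ≤ Fintype.card α ^ 2 := by
    exact_mod_cast (card_le_univ I).trans_eq (by simp [sq])
  have hbad : ∀ p ∈ I, (#(bad p) : ℝ) ≤ δ * N := fun p hp => by
    simp only [I, mem_filter, mem_univ, true_and] at hp
    exact card_filter_eqOn_not_adj_le G hG s g hp.2 hp.1
  have hN : 0 ≤ δ * N := by positivity
  have hunion := (card_le_card hcover).trans
    ((card_union_le _ _).trans (add_le_add_right card_biUnion_le _))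
  rw [card_filter_eqOn] at hunion
  calc (1 - δ * Fintype.card α ^ 2) * N = N - Fintype.card α ^ 2 * (δ * N) := by ring
    _ ≤ N - #I * (δ * N) := by gcongr
    _ ≤ N - ∑ p ∈ I, (#(bad p) : ℝ) := by
        gcongr
        simpa using sum_le_card_nsmul I (fun p => (#(bad p) : ℝ)) _ hbad
    _ ≤ _ := by
        rw [sub_le_iff_le_add]; simp only [N]
        exact_mod_cast hunion

theorem card_filter_pair_pairwise_adj_ge (G : SimpleGraph V) [DecidableRel G.Adj] {δ : ℝ}
    (hδ : 0 ≤ δ) (hG : ∀ x, (#{y | ¬G.Adj x y} : ℝ) ≤ δ * Fintype.card V)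
    {a b : α} (hab : a ≠ b) {v₁ v₂ : V} (hadj : G.Adj v₁ v₂) :
    (1 - δ * Fintype.card α ^ 2) * Fintype.card V ^ (Fintype.card α - 2) ≤
      #{f : α → V | f a = v₁ ∧ f b = v₂ ∧ ∀ ⦃u w⦄, u ≠ w → G.Adj (f u) (f w)} := by
  set g : α → V := fun i => if i = a then v₁ else v₂
  have hg : (({a, b} : Finset α) : Set α).Pairwise (G.Adj on g) := by
    simp [Set.pairwise_pair, g, onFun, hab.symm, hadj, hadj.symm]
  convert card_filter_eqOn_pairwise_adj_ge G hδ hG {a, b} g hg using 4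
  · rw [card_pair hab]
  · simp [g, hab.symm, and_assoc]

end

theorem injCount_eq_card {α V : Type*} [Fintype α] [DecidableEq α] [Fintype V] [DecidableEq V]
    (H : SimpleGraph α) (G : SimpleGraph V) [DecidableRel H.Adj] [DecidableRel G.Adj] :
    injCount H G = #{f : α → V | Injective f ∧ ∀ ⦃a b⦄, H.Adj a b → G.Adj (f a) (f b)} := by
  rw [injCount, Nat.card_eq_fintype_card, Fintype.card_subtype]

theorem injCount_add_sum_card_le {α V : Type*} [Fintype α] [DecidableEq α] [Fintype V]
    [DecidableEq V] (H : SimpleGraph α) [DecidableRel H.Adj] {G G' : SimpleGraph V}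
    [DecidableRel G.Adj] [DecidableRel G'.Adj] (hle : G ≤ G') {v₁ v₂ : V}
    (hnadj : ¬G.Adj v₁ v₂) :
    injCount H G + ∑ d : H.Dart,
        #{f : α → V | f d.fst = v₁ ∧ f d.snd = v₂ ∧ ∀ ⦃u w⦄, u ≠ w → G'.Adj (f u) (f w)} ≤
      injCount H G' := by
  rw [injCount_eq_card, injCount_eq_card]
  set good : H.Dart → Finset (α → V) := fun d =>
    {f | f d.fst = v₁ ∧ f d.snd = v₂ ∧ ∀ ⦃u w⦄, u ≠ w → G'.Adj (f u) (f w)}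
  have hdisj : ((univ : Finset H.Dart) : Set H.Dart).PairwiseDisjoint good := by
    intro d _ d' _ hdd'
    refine disjoint_left.2 fun f hf hf' => hdd' ?_
    simp only [good, mem_filter, mem_univ, true_and] at hf hf'
    have hinj : Injective f := fun u w h => by_contra fun huw => (hf.2.2 huw).ne h
    exact Dart.ext _ _ (Prod.ext (hinj (hf.1.trans hf'.1.symm))
      (hinj (hf.2.1.trans hf'.2.1.symm)))
  have hgood : ∀ d, good d ⊆
      ({f | Injective f ∧ ∀ ⦃a b⦄, H.Adj a b → G'.Adj (f a) (f b)} : Finset (α → V)) := by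
    intro d f hf
    simp only [good, mem_filter, mem_univ, true_and] at hf ⊢
    exact ⟨fun u w h => by_contra fun huw => (hf.2.2 huw).ne h, fun a b hab => hf.2.2 hab.ne⟩
  have hdisj' : Disjoint ({f | Injective f ∧ ∀ ⦃a b⦄, H.Adj a b → G.Adj (f a) (f b)} : Finset _)
      (univ.biUnion good) := by
    refine disjoint_left.2 fun f hf hf' => ?_
    obtain ⟨d, -, hd⟩ := mem_biUnion.1 hf'
    simp only [good, mem_filter, mem_univ, true_and] at hf hd
    exact hnadj (hd.1 ▸ hd.2.1 ▸ hf.2 d.adj)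
  rw [← card_biUnion hdisj, ← card_union_of_disjoint hdisj']
  refine card_le_card (union_subset (fun f hf => ?_) (biUnion_subset.2 fun d _ => hgood d))
  simp only [mem_filter, mem_univ, true_and] at hf ⊢
  exact ⟨hf.1, fun a b hab => hle (hf.2 hab)⟩

theorem add_edge_gain_general {α V : Type*} [Fintype α] [Fintype V]
    (H : SimpleGraph α) (δ : ℝ) (hδ : 0 < δ)
    (G : SimpleGraph V)
    (hdense : ∀ v : V, (1 - δ) * (Fintype.card V : ℝ) ≤ ((G.neighborSet v).ncard : ℝ))
    (v₁ v₂ : V) (hne : v₁ ≠ v₂) (hnadj : ¬ G.Adj v₁ v₂) :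
    2 * (H.edgeSet.ncard : ℝ) * (1 - δ * (Fintype.card α : ℝ) ^ 2) *
        (Fintype.card V : ℝ) ^ (Fintype.card α - 2) ≤
      (injCount H (G ⊔ edge v₁ v₂) : ℝ) - (injCount H G : ℝ) := by
  classical
  set G' := G ⊔ edge v₁ v₂
  have hadj : G'.Adj v₁ v₂ := by simp [G', edge_adj, hne]
  have hsparse := card_filter_not_adj_le G' fun v =>
    (hdense v).trans (by exact_mod_cast Set.ncard_le_ncard (neighborSet_mono le_sup_left v))
  have hdarts : 2 * (H.edgeSet.ncard : ℝ) = Fintype.card H.Dart := by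
    rw [dart_card_eq_twice_card_edges, ← coe_edgeFinset, Set.ncard_coe_finset]; push_cast; rfl
  calc _ = ∑ _d : H.Dart,
        (1 - δ * Fintype.card α ^ 2) * (Fintype.card V : ℝ) ^ (Fintype.card α - 2) := by
        rw [sum_const, card_univ, nsmul_eq_mul, ← hdarts, mul_assoc]
    _ ≤ ∑ d : H.Dart, (#{f : α → V | f d.fst = v₁ ∧ f d.snd = v₂ ∧
          ∀ ⦃u w⦄, u ≠ w → G'.Adj (f u) (f w)} : ℝ) :=
        sum_le_sum fun d _ => card_filter_pair_pairwise_adj_ge G' hδ.le hsparse d.adj.ne hadj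
    _ ≤ _ := by
        rw [le_sub_iff_add_le']
        exact_mod_cast injCount_add_sum_card_le H (le_sup_left : G ≤ G') hnadj

/-- Let `H` have at least one edge, `δ > 0`, `G` be `δ`-dense, and `v₁, v₂` be distinct
non-adjacent vertices of `G`.  If `G'` is obtained from `G` by adding the edge `v₁v₂`,
then `inj(H,G') − inj(H,G) ≥ 2·e(H)·(1 − δ·v(H)²)·v(G)^{v(H)−2}`. -/
theorem add_edge_gain {α V : Type*} [Fintype α] [Fintype V]
    (H : SimpleGraph α) (hH : H.edgeSet.Nonempty) (δ : ℝ) (hδ : 0 < δ)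
    (G : SimpleGraph V)
    (hdense : ∀ v : V, (1 - δ) * (Fintype.card V : ℝ) ≤ ((G.neighborSet v).ncard : ℝ))
    (v₁ v₂ : V) (hne : v₁ ≠ v₂) (hnadj : ¬ G.Adj v₁ v₂) :
    2 * (H.edgeSet.ncard : ℝ) * (1 - δ * (Fintype.card α : ℝ) ^ 2) *
        (Fintype.card V : ℝ) ^ (Fintype.card α - 2) ≤
      (injCount H (G ⊔ edge v₁ v₂) : ℝ) - (injCount H G : ℝ) :=
  add_edge_gain_general H δ hδ G hdense v₁ v₂ hne hnadj
end
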